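/- arXiv:2108.02918 — 4 statements merged into one kernel-verified Lean document; each statement's English description precedes it below -/
import Mathlib

section
/- Let $d, d' \ge 1$, let $a(n) = \sum_{i=1}^d A_i \alpha_i^n$ and $b(n) = \sum_{j=1}^{d'} B_j \beta_j^n$ for complex numbers $A_i, \alpha_i, B_j, \beta_j$, and let $C(n) = \sum_{k=0}^{n} \binom{n}{k} a(k) b(n-k)$. Let $P(x) = x^{D} - \sum_{k=1}^{D} c_k x^{D-k}$ (with $D = d\,d'$ and complex coefficients $c_k$) be any monic polynomial of degree $D$ such that $P(\alpha_i + \beta_j) = 0$ for all $1 \le i \le d$ and $1 \le j \le d'$. Then $C$ satisfies the linear recurrence with constant coefficients $C(n+D) = \sum_{k=1}^{D} c_k\, C(n+D-k)$ for all natural numbers $n$; in particular $C$ is C-finite of order at most $d\,d'$. -/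
open Finset

/-- The binomial convolution of two Binet-type sequences satisfies, for any monic
polynomial `P(x) = x^D - ∑ₖ cₖ x^(D-k)` of degree `D = d * d'` that vanishes at all the
sums `αᵢ + βⱼ`, the linear recurrence with constant coefficients `cₖ` of order `D`;
in particular it is C-finite of order at most `d * d'`. -/
theorem binomial_convolution_cfinite
    (d d' : ℕ) (hd : 1 ≤ d) (hd' : 1 ≤ d')
    (A α : ℕ → ℂ) (B β : ℕ → ℂ)
    (a b C : ℕ → ℂ)
    (ha : ∀ n : ℕ, a n = ∑ i ∈ Finset.Icc 1 d, A i * α i ^ n)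
    (hb : ∀ n : ℕ, b n = ∑ j ∈ Finset.Icc 1 d', B j * β j ^ n)
    (hC : ∀ n : ℕ, C n = ∑ k ∈ Finset.range (n + 1), (n.choose k : ℂ) * a k * b (n - k))
    (D : ℕ) (hD : D = d * d')
    (c : ℕ → ℂ)
    (hroot : ∀ i ∈ Finset.Icc 1 d, ∀ j ∈ Finset.Icc 1 d',
      (α i + β j) ^ D - ∑ k ∈ Finset.Icc 1 D, c k * (α i + β j) ^ (D - k) = 0) :
    ∀ n : ℕ, C (n + D) = ∑ k ∈ Finset.Icc 1 D, c k * C (n + D - k) := by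
  have key : ∀ n : ℕ, C n = ∑ i ∈ Finset.Icc 1 d, ∑ j ∈ Finset.Icc 1 d',
      A i * B j * (α i + β j) ^ n := by
    intro n
    rw [hC]
    calc ∑ k ∈ Finset.range (n + 1), (n.choose k : ℂ) * a k * b (n - k)
        = ∑ k ∈ Finset.range (n + 1), ∑ i ∈ Finset.Icc 1 d, ∑ j ∈ Finset.Icc 1 d',
            A i * B j * (α i ^ k * β j ^ (n - k) * (n.choose k : ℂ)) := by
          refine Finset.sum_congr rfl fun k _ => ?_
          rw [ha, hb, mul_assoc, Finset.sum_mul_sum, Finset.mul_sum]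
          refine Finset.sum_congr rfl fun i _ => ?_
          rw [Finset.mul_sum]
          refine Finset.sum_congr rfl fun j _ => ?_
          ring
      _ = ∑ i ∈ Finset.Icc 1 d, ∑ k ∈ Finset.range (n + 1), ∑ j ∈ Finset.Icc 1 d',
            A i * B j * (α i ^ k * β j ^ (n - k) * (n.choose k : ℂ)) :=
          Finset.sum_comm
      _ = ∑ i ∈ Finset.Icc 1 d, ∑ j ∈ Finset.Icc 1 d', ∑ k ∈ Finset.range (n + 1),
            A i * B j * (α i ^ k * β j ^ (n - k) * (n.choose k : ℂ)) :=
          Finset.sum_congr rfl fun i _ => Finset.sum_comm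
      _ = ∑ i ∈ Finset.Icc 1 d, ∑ j ∈ Finset.Icc 1 d', A i * B j * (α i + β j) ^ n := by
          refine Finset.sum_congr rfl fun i _ => Finset.sum_congr rfl fun j _ => ?_
          rw [Commute.add_pow (Commute.all _ _), Finset.mul_sum]
  intro n
  have swap : ∑ k ∈ Finset.Icc 1 D, c k * C (n + D - k)
      = ∑ i ∈ Finset.Icc 1 d, ∑ j ∈ Finset.Icc 1 d',
          ∑ k ∈ Finset.Icc 1 D, c k * (A i * B j * (α i + β j) ^ (n + D - k)) := by
    calc ∑ k ∈ Finset.Icc 1 D, c k * C (n + D - k)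
        = ∑ k ∈ Finset.Icc 1 D, ∑ i ∈ Finset.Icc 1 d, ∑ j ∈ Finset.Icc 1 d',
            c k * (A i * B j * (α i + β j) ^ (n + D - k)) := by
          refine Finset.sum_congr rfl fun k _ => ?_
          rw [key, Finset.mul_sum]
          exact Finset.sum_congr rfl fun i _ => (Finset.mul_sum _ _ _)
      _ = ∑ i ∈ Finset.Icc 1 d, ∑ k ∈ Finset.Icc 1 D, ∑ j ∈ Finset.Icc 1 d',
            c k * (A i * B j * (α i + β j) ^ (n + D - k)) := Finset.sum_comm
      _ = _ := Finset.sum_congr rfl fun i _ => Finset.sum_comm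
  rw [key, swap]
  refine Finset.sum_congr rfl fun i hi => Finset.sum_congr rfl fun j hj => ?_
  have h0 := hroot i hi j hj
  have hpow : (α i + β j) ^ D = ∑ k ∈ Finset.Icc 1 D, c k * (α i + β j) ^ (D - k) := by
    linear_combination h0
  calc A i * B j * (α i + β j) ^ (n + D)
      = A i * B j * ((α i + β j) ^ n * ∑ k ∈ Finset.Icc 1 D, c k * (α i + β j) ^ (D - k)) := by
        rw [pow_add, hpow]
    _ = ∑ k ∈ Finset.Icc 1 D, c k * (A i * B j * ((α i + β j) ^ n * (α i + β j) ^ (D - k))) := by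
        rw [Finset.mul_sum, Finset.mul_sum]
        exact Finset.sum_congr rfl fun k _ => by ring
    _ = ∑ k ∈ Finset.Icc 1 D, c k * (A i * B j * (α i + β j) ^ (n + D - k)) := by
        refine Finset.sum_congr rfl fun k hk => ?_
        have hk' : k ≤ D := (Finset.mem_Icc.mp hk).2
        rw [← pow_add, show n + (D - k) = n + D - k by omega]
end

section
/- Let $d, d' \ge 1$, let $a(n) = \sum_{i=1}^d A_i \alpha_i^n$ and $b(n) = \sum_{j=1}^{d'} B_j \beta_j^n$ for complex numbers $A_i, \alpha_i, B_j, \beta_j$, and let $C(n) = \sum_{k=0}^{n} \binom{n}{k} a(k) b(n-k)$. Then the ordinary generating function of $C$ is rational with denominator of degree at most $d\,d'$: there exist polynomials $p, q \in \mathbb{C}[x]$ with $q(0) = 1$, $\deg q \le d\,d'$, and $\deg p \le d\,d' - 1$, such that the formal power series identity $q(x) \cdot \sum_{n=0}^{\infty} C(n) x^n = p(x)$ holds in $\mathbb{C}[[x]]$. -/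
/-!
Expanding `a` and `b` and applying the binomial theorem termwise gives the Binet form
`C n = ∑ i j, A i * B j * (α i + β j) ^ n` with `d * d'` terms. Each geometric series
`∑ γ ^ n * x ^ n` is inverted by `1 - γ x`, so multiplying by `∏ (1 - γ x)` over all `d * d'`
frequencies turns `∑ C n * x ^ n` into a polynomial of degree below `d * d'`.
-/

open Finset PowerSeries

theorem sum_range_choose_mul_sum_mul_pow_mul_sum_mul_pow {R ι κ : Type*} [CommSemiring R]
    (s : Finset ι) (t : Finset κ) (A α : ι → R) (B β : κ → R) (n : ℕ) :
    ∑ k ∈ range (n + 1), (n.choose k : R) * (∑ i ∈ s, A i * α i ^ k) *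
        ∑ j ∈ t, B j * β j ^ (n - k) =
      ∑ x ∈ s ×ˢ t, A x.1 * B x.2 * (α x.1 + β x.2) ^ n := by
  simp_rw [mul_assoc, sum_mul_sum, ← sum_product' s t, mul_sum]
  rw [Finset.sum_comm]
  refine Finset.sum_congr rfl fun x _ => ?_
  simp_rw [add_pow, mul_sum]
  exact Finset.sum_congr rfl fun k _ => by ring

section

variable {R ι : Type*} [CommRing R]

theorem one_sub_C_mul_X_mul_mk_pow (z : R) : (1 - C z * X : R⟦X⟧) * mk (z ^ ·) = 1 := by
  have h := congrArg (rescale z) (mk_one_mul_one_sub_eq_one (S := R))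
  rw [map_mul, map_sub, map_one, rescale_X, rescale_mk] at h
  simpa [mul_comm] using h

theorem mk_sum_mul_pow (S : Finset ι) (c γ : ι → R) :
    mk (fun n => ∑ s ∈ S, c s * γ s ^ n) = ∑ s ∈ S, C (c s) * mk (γ s ^ ·) := by
  ext n
  simp [map_sum, coeff_C_mul]

theorem coe_prod_one_sub_C_mul_X_mul_mk_sum_mul_pow [DecidableEq ι] (S : Finset ι)
    (c γ : ι → R) :
    ((∏ s ∈ S, (1 - Polynomial.C (γ s) * Polynomial.X) : Polynomial R) : PowerSeries R) *
        mk (fun n => ∑ s ∈ S, c s * γ s ^ n) =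
      ((∑ s ∈ S, Polynomial.C (c s) *
        ∏ t ∈ S.erase s, (1 - Polynomial.C (γ t) * Polynomial.X) : Polynomial R) :
          PowerSeries R) := by
  simp only [← Polynomial.coeToPowerSeries.ringHom_apply, map_sum, map_prod, map_mul, map_sub,
    map_one]
  simp only [Polynomial.coeToPowerSeries.ringHom_apply, Polynomial.coe_C, Polynomial.coe_X]
  rw [mk_sum_mul_pow, mul_sum]
  refine Finset.sum_congr rfl fun s hs => ?_
  rw [← mul_prod_erase S _ hs]
  linear_combination (C (c s) * ∏ t ∈ S.erase s, (1 - C (γ t) * X) : R⟦X⟧) *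
    one_sub_C_mul_X_mul_mk_pow (γ s)

theorem natDegree_prod_one_sub_C_mul_X_le (S : Finset ι) (γ : ι → R) :
    (∏ s ∈ S, (1 - Polynomial.C (γ s) * Polynomial.X)).natDegree ≤ #S := by
  refine (Polynomial.natDegree_prod_le _ _).trans ?_
  refine (sum_le_card_nsmul S (fun s => (1 - Polynomial.C (γ s) * Polynomial.X).natDegree) 1
    fun s _ => by compute_degree).trans_eq ?_
  rw [smul_eq_mul, mul_one]

theorem exists_coe_mul_mk_sum_mul_pow_eq_coe (S : Finset ι) (c γ : ι → R) :
    ∃ p q : Polynomial R, q.coeff 0 = 1 ∧ q.natDegree ≤ #S ∧ p.natDegree ≤ #S - 1 ∧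
      (q : PowerSeries R) * mk (fun n => ∑ s ∈ S, c s * γ s ^ n) = p := by
  classical
  refine ⟨_, _, ?_, natDegree_prod_one_sub_C_mul_X_le S γ, ?_,
    coe_prod_one_sub_C_mul_X_mul_mk_sum_mul_pow S c γ⟩
  · simp [Polynomial.coeff_zero_eq_eval_zero, Polynomial.eval_prod]
  · refine Polynomial.natDegree_sum_le_of_forall_le _ _ fun s hs => ?_
    refine (Polynomial.natDegree_C_mul_le _ _).trans ?_
    exact (natDegree_prod_one_sub_C_mul_X_le _ γ).trans (card_erase_of_mem hs).le

end

theorem binomial_convolution_ogf_rational_general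
    (d d' : ℕ)
    (A α : ℕ → ℂ) (B β : ℕ → ℂ)
    (a b C : ℕ → ℂ)
    (ha : ∀ n : ℕ, a n = ∑ i ∈ Finset.Icc 1 d, A i * α i ^ n)
    (hb : ∀ n : ℕ, b n = ∑ j ∈ Finset.Icc 1 d', B j * β j ^ n)
    (hC : ∀ n : ℕ, C n = ∑ k ∈ Finset.range (n + 1), (n.choose k : ℂ) * a k * b (n - k)) :
    ∃ p q : Polynomial ℂ, q.coeff 0 = 1 ∧ q.natDegree ≤ d * d' ∧
      p.natDegree ≤ d * d' - 1 ∧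
      (q : PowerSeries ℂ) * PowerSeries.mk C = (p : PowerSeries ℂ) := by
  have hC_binet :
      C = fun n => ∑ x ∈ Icc 1 d ×ˢ Icc 1 d', A x.1 * B x.2 * (α x.1 + β x.2) ^ n := by
    funext n
    simp only [hC, ha, hb, sum_range_choose_mul_sum_mul_pow_mul_sum_mul_pow]
  have hcard : #(Icc 1 d ×ˢ Icc 1 d') = d * d' := by simp
  rw [hC_binet, ← hcard]
  exact exists_coe_mul_mk_sum_mul_pow_eq_coe _ _ _

/-- The ordinary generating function of the binomial convolution of two Binet-type
sequences is rational, with denominator degree at most `d * d'` and numerator degree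
at most `d * d' - 1`. -/
theorem binomial_convolution_ogf_rational
    (d d' : ℕ) (hd : 1 ≤ d) (hd' : 1 ≤ d')
    (A α : ℕ → ℂ) (B β : ℕ → ℂ)
    (a b C : ℕ → ℂ)
    (ha : ∀ n : ℕ, a n = ∑ i ∈ Finset.Icc 1 d, A i * α i ^ n)
    (hb : ∀ n : ℕ, b n = ∑ j ∈ Finset.Icc 1 d', B j * β j ^ n)
    (hC : ∀ n : ℕ, C n = ∑ k ∈ Finset.range (n + 1), (n.choose k : ℂ) * a k * b (n - k)) :
    ∃ p q : Polynomial ℂ, q.coeff 0 = 1 ∧ q.natDegree ≤ d * d' ∧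
      p.natDegree ≤ d * d' - 1 ∧
      (q : PowerSeries ℂ) * PowerSeries.mk C = (p : PowerSeries ℂ) :=
  binomial_convolution_ogf_rational_general d d' A α B β a b C ha hb hC
end

section
/- Let $T$ be the Tribonacci sequence, defined by $T_0 = 0$, $T_1 = 1$, $T_2 = 1$, and $T_{n+3} = T_{n+2} + T_{n+1} + T_n$, and let $C(n) = \sum_{k=0}^{n} \binom{n}{k} T_k T_{n-k}$ be its binomial self-convolution. Then $C$ satisfies the order-6 linear recurrence with constant coefficients: for all natural numbers $n$, $C(n+6) = 4\,C(n+5) - 2\,C(n+3) - 12\,C(n+2) + 8\,C(n+1) + 16\,C(n)$. -/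
open Finset

def Saux (T : ℕ → ℤ) (i j m : ℕ) : ℤ :=
  ∑ k ∈ Finset.range (m + 1), (m.choose k : ℤ) * (T (k + i) * T (m - k + j))

lemma Saux_step (T : ℕ → ℤ) (a b m : ℕ) :
    Saux T a b (m + 1) = Saux T a (b + 1) m + Saux T (a + 1) b m := by
  have h := Finset.sum_choose_succ_mul (fun u v => T (u + a) * T (v + b)) m
  unfold Saux
  have e : m + 1 + 1 = m + 2 := rfl
  rw [e, h]
  congr 1
  · apply Finset.sum_congr rfl
    intro k hk
    simp only [Finset.mem_range] at hk
    have e2 : m + 1 - k + b = m - k + (b + 1) := by omega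
    rw [e2]
  · apply Finset.sum_congr rfl
    intro k _
    have e2 : k + 1 + a = k + (a + 1) := by omega
    rw [e2]

lemma Saux_rec1 (T : ℕ → ℤ)
    (hTrec : ∀ n : ℕ, T (n + 3) = T (n + 2) + T (n + 1) + T n) (a b m : ℕ) :
    Saux T (a + 3) b m = Saux T (a + 2) b m + Saux T (a + 1) b m + Saux T a b m := by
  unfold Saux
  rw [← Finset.sum_add_distrib, ← Finset.sum_add_distrib]
  apply Finset.sum_congr rfl
  intro k _
  rw [show k + (a + 3) = k + a + 3 from by omega, hTrec (k + a),
    show k + a + 2 = k + (a + 2) from by omega,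
    show k + a + 1 = k + (a + 1) from by omega]
  ring

lemma Saux_rec2 (T : ℕ → ℤ)
    (hTrec : ∀ n : ℕ, T (n + 3) = T (n + 2) + T (n + 1) + T n) (a b m : ℕ) :
    Saux T a (b + 3) m = Saux T a (b + 2) m + Saux T a (b + 1) m + Saux T a b m := by
  unfold Saux
  rw [← Finset.sum_add_distrib, ← Finset.sum_add_distrib]
  apply Finset.sum_congr rfl
  intro k _
  rw [show m - k + (b + 3) = m - k + b + 3 from by omega, hTrec (m - k + b),
    show m - k + b + 2 = m - k + (b + 2) from by omega,
    show m - k + b + 1 = m - k + (b + 1) from by omega]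
  ring

/-- The binomial self-convolution of the Tribonacci numbers satisfies an order-6 linear
recurrence with constant coefficients. -/
theorem tribonacci_self_convolution_recurrence
    (T : ℕ → ℤ)
    (hT0 : T 0 = 0) (hT1 : T 1 = 1) (hT2 : T 2 = 1)
    (hTrec : ∀ n : ℕ, T (n + 3) = T (n + 2) + T (n + 1) + T n)
    (C : ℕ → ℤ)
    (hC : ∀ n : ℕ, C n = ∑ k ∈ Finset.range (n + 1), (n.choose k : ℤ) * T k * T (n - k)) :
    ∀ n : ℕ, C (n + 6) =
      4 * C (n + 5) - 2 * C (n + 3) - 12 * C (n + 2) + 8 * C (n + 1) + 16 * C n := by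
  have hCS : ∀ m : ℕ, C m = Saux T 0 0 m := by
    intro m
    rw [hC]
    unfold Saux
    apply Finset.sum_congr rfl
    intro k _
    simp [mul_assoc]
  intro n
  rw [hCS, hCS, hCS, hCS, hCS, hCS]

  have h0_0_6 : Saux T 0 0 (n + 6) = Saux T 0 1 (n + 5) + Saux T 1 0 (n + 5) := Saux_step T 0 0 (n + 5)
  have h0_0_5 : Saux T 0 0 (n + 5) = Saux T 0 1 (n + 4) + Saux T 1 0 (n + 4) := Saux_step T 0 0 (n + 4)
  have h0_1_5 : Saux T 0 1 (n + 5) = Saux T 0 2 (n + 4) + Saux T 1 1 (n + 4) := Saux_step T 0 1 (n + 4)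
  have h1_0_5 : Saux T 1 0 (n + 5) = Saux T 1 1 (n + 4) + Saux T 2 0 (n + 4) := Saux_step T 1 0 (n + 4)
  have h0_0_4 : Saux T 0 0 (n + 4) = Saux T 0 1 (n + 3) + Saux T 1 0 (n + 3) := Saux_step T 0 0 (n + 3)
  have h0_1_4 : Saux T 0 1 (n + 4) = Saux T 0 2 (n + 3) + Saux T 1 1 (n + 3) := Saux_step T 0 1 (n + 3)
  have h0_2_4 : Saux T 0 2 (n + 4) = Saux T 0 3 (n + 3) + Saux T 1 2 (n + 3) := Saux_step T 0 2 (n + 3)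
  have h1_0_4 : Saux T 1 0 (n + 4) = Saux T 1 1 (n + 3) + Saux T 2 0 (n + 3) := Saux_step T 1 0 (n + 3)
  have h1_1_4 : Saux T 1 1 (n + 4) = Saux T 1 2 (n + 3) + Saux T 2 1 (n + 3) := Saux_step T 1 1 (n + 3)
  have h2_0_4 : Saux T 2 0 (n + 4) = Saux T 2 1 (n + 3) + Saux T 3 0 (n + 3) := Saux_step T 2 0 (n + 3)
  have h0_0_3 : Saux T 0 0 (n + 3) = Saux T 0 1 (n + 2) + Saux T 1 0 (n + 2) := Saux_step T 0 0 (n + 2)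
  have h0_1_3 : Saux T 0 1 (n + 3) = Saux T 0 2 (n + 2) + Saux T 1 1 (n + 2) := Saux_step T 0 1 (n + 2)
  have h0_2_3 : Saux T 0 2 (n + 3) = Saux T 0 3 (n + 2) + Saux T 1 2 (n + 2) := Saux_step T 0 2 (n + 2)
  have h0_3_3 : Saux T 0 3 (n + 3) = Saux T 0 4 (n + 2) + Saux T 1 3 (n + 2) := Saux_step T 0 3 (n + 2)
  have h1_0_3 : Saux T 1 0 (n + 3) = Saux T 1 1 (n + 2) + Saux T 2 0 (n + 2) := Saux_step T 1 0 (n + 2)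
  have h1_1_3 : Saux T 1 1 (n + 3) = Saux T 1 2 (n + 2) + Saux T 2 1 (n + 2) := Saux_step T 1 1 (n + 2)
  have h1_2_3 : Saux T 1 2 (n + 3) = Saux T 1 3 (n + 2) + Saux T 2 2 (n + 2) := Saux_step T 1 2 (n + 2)
  have h2_0_3 : Saux T 2 0 (n + 3) = Saux T 2 1 (n + 2) + Saux T 3 0 (n + 2) := Saux_step T 2 0 (n + 2)
  have h2_1_3 : Saux T 2 1 (n + 3) = Saux T 2 2 (n + 2) + Saux T 3 1 (n + 2) := Saux_step T 2 1 (n + 2)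
  have h3_0_3 : Saux T 3 0 (n + 3) = Saux T 3 1 (n + 2) + Saux T 4 0 (n + 2) := Saux_step T 3 0 (n + 2)
  have h0_0_2 : Saux T 0 0 (n + 2) = Saux T 0 1 (n + 1) + Saux T 1 0 (n + 1) := Saux_step T 0 0 (n + 1)
  have h0_1_2 : Saux T 0 1 (n + 2) = Saux T 0 2 (n + 1) + Saux T 1 1 (n + 1) := Saux_step T 0 1 (n + 1)
  have h0_2_2 : Saux T 0 2 (n + 2) = Saux T 0 3 (n + 1) + Saux T 1 2 (n + 1) := Saux_step T 0 2 (n + 1)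
  have h0_3_2 : Saux T 0 3 (n + 2) = Saux T 0 4 (n + 1) + Saux T 1 3 (n + 1) := Saux_step T 0 3 (n + 1)
  have h0_4_2 : Saux T 0 4 (n + 2) = Saux T 0 5 (n + 1) + Saux T 1 4 (n + 1) := Saux_step T 0 4 (n + 1)
  have h1_0_2 : Saux T 1 0 (n + 2) = Saux T 1 1 (n + 1) + Saux T 2 0 (n + 1) := Saux_step T 1 0 (n + 1)
  have h1_1_2 : Saux T 1 1 (n + 2) = Saux T 1 2 (n + 1) + Saux T 2 1 (n + 1) := Saux_step T 1 1 (n + 1)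
  have h1_2_2 : Saux T 1 2 (n + 2) = Saux T 1 3 (n + 1) + Saux T 2 2 (n + 1) := Saux_step T 1 2 (n + 1)
  have h1_3_2 : Saux T 1 3 (n + 2) = Saux T 1 4 (n + 1) + Saux T 2 3 (n + 1) := Saux_step T 1 3 (n + 1)
  have h2_0_2 : Saux T 2 0 (n + 2) = Saux T 2 1 (n + 1) + Saux T 3 0 (n + 1) := Saux_step T 2 0 (n + 1)
  have h2_1_2 : Saux T 2 1 (n + 2) = Saux T 2 2 (n + 1) + Saux T 3 1 (n + 1) := Saux_step T 2 1 (n + 1)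
  have h2_2_2 : Saux T 2 2 (n + 2) = Saux T 2 3 (n + 1) + Saux T 3 2 (n + 1) := Saux_step T 2 2 (n + 1)
  have h3_0_2 : Saux T 3 0 (n + 2) = Saux T 3 1 (n + 1) + Saux T 4 0 (n + 1) := Saux_step T 3 0 (n + 1)
  have h3_1_2 : Saux T 3 1 (n + 2) = Saux T 3 2 (n + 1) + Saux T 4 1 (n + 1) := Saux_step T 3 1 (n + 1)
  have h4_0_2 : Saux T 4 0 (n + 2) = Saux T 4 1 (n + 1) + Saux T 5 0 (n + 1) := Saux_step T 4 0 (n + 1)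
  have h0_0_1 : Saux T 0 0 (n + 1) = Saux T 0 1 n + Saux T 1 0 n := Saux_step T 0 0 n
  have h0_1_1 : Saux T 0 1 (n + 1) = Saux T 0 2 n + Saux T 1 1 n := Saux_step T 0 1 n
  have h0_2_1 : Saux T 0 2 (n + 1) = Saux T 0 3 n + Saux T 1 2 n := Saux_step T 0 2 n
  have h0_3_1 : Saux T 0 3 (n + 1) = Saux T 0 4 n + Saux T 1 3 n := Saux_step T 0 3 n
  have h0_4_1 : Saux T 0 4 (n + 1) = Saux T 0 5 n + Saux T 1 4 n := Saux_step T 0 4 n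
  have h0_5_1 : Saux T 0 5 (n + 1) = Saux T 0 6 n + Saux T 1 5 n := Saux_step T 0 5 n
  have h1_0_1 : Saux T 1 0 (n + 1) = Saux T 1 1 n + Saux T 2 0 n := Saux_step T 1 0 n
  have h1_1_1 : Saux T 1 1 (n + 1) = Saux T 1 2 n + Saux T 2 1 n := Saux_step T 1 1 n
  have h1_2_1 : Saux T 1 2 (n + 1) = Saux T 1 3 n + Saux T 2 2 n := Saux_step T 1 2 n
  have h1_3_1 : Saux T 1 3 (n + 1) = Saux T 1 4 n + Saux T 2 3 n := Saux_step T 1 3 n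
  have h1_4_1 : Saux T 1 4 (n + 1) = Saux T 1 5 n + Saux T 2 4 n := Saux_step T 1 4 n
  have h2_0_1 : Saux T 2 0 (n + 1) = Saux T 2 1 n + Saux T 3 0 n := Saux_step T 2 0 n
  have h2_1_1 : Saux T 2 1 (n + 1) = Saux T 2 2 n + Saux T 3 1 n := Saux_step T 2 1 n
  have h2_2_1 : Saux T 2 2 (n + 1) = Saux T 2 3 n + Saux T 3 2 n := Saux_step T 2 2 n
  have h2_3_1 : Saux T 2 3 (n + 1) = Saux T 2 4 n + Saux T 3 3 n := Saux_step T 2 3 n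
  have h3_0_1 : Saux T 3 0 (n + 1) = Saux T 3 1 n + Saux T 4 0 n := Saux_step T 3 0 n
  have h3_1_1 : Saux T 3 1 (n + 1) = Saux T 3 2 n + Saux T 4 1 n := Saux_step T 3 1 n
  have h3_2_1 : Saux T 3 2 (n + 1) = Saux T 3 3 n + Saux T 4 2 n := Saux_step T 3 2 n
  have h4_0_1 : Saux T 4 0 (n + 1) = Saux T 4 1 n + Saux T 5 0 n := Saux_step T 4 0 n
  have h4_1_1 : Saux T 4 1 (n + 1) = Saux T 4 2 n + Saux T 5 1 n := Saux_step T 4 1 n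
  have h5_0_1 : Saux T 5 0 (n + 1) = Saux T 5 1 n + Saux T 6 0 n := Saux_step T 5 0 n
  have r6_0 : Saux T 6 0 n = Saux T 5 0 n + Saux T 4 0 n + Saux T 3 0 n := Saux_rec1 T hTrec 3 0 n
  have r5_0 : Saux T 5 0 n = Saux T 4 0 n + Saux T 3 0 n + Saux T 2 0 n := Saux_rec1 T hTrec 2 0 n
  have r5_1 : Saux T 5 1 n = Saux T 4 1 n + Saux T 3 1 n + Saux T 2 1 n := Saux_rec1 T hTrec 2 1 n
  have r4_0 : Saux T 4 0 n = Saux T 3 0 n + Saux T 2 0 n + Saux T 1 0 n := Saux_rec1 T hTrec 1 0 n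
  have r4_1 : Saux T 4 1 n = Saux T 3 1 n + Saux T 2 1 n + Saux T 1 1 n := Saux_rec1 T hTrec 1 1 n
  have r4_2 : Saux T 4 2 n = Saux T 3 2 n + Saux T 2 2 n + Saux T 1 2 n := Saux_rec1 T hTrec 1 2 n
  have r3_0 : Saux T 3 0 n = Saux T 2 0 n + Saux T 1 0 n + Saux T 0 0 n := Saux_rec1 T hTrec 0 0 n
  have r3_1 : Saux T 3 1 n = Saux T 2 1 n + Saux T 1 1 n + Saux T 0 1 n := Saux_rec1 T hTrec 0 1 n
  have r3_2 : Saux T 3 2 n = Saux T 2 2 n + Saux T 1 2 n + Saux T 0 2 n := Saux_rec1 T hTrec 0 2 n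
  have r3_3 : Saux T 3 3 n = Saux T 2 3 n + Saux T 1 3 n + Saux T 0 3 n := Saux_rec1 T hTrec 0 3 n
  have r0_6 : Saux T 0 6 n = Saux T 0 5 n + Saux T 0 4 n + Saux T 0 3 n := Saux_rec2 T hTrec 0 3 n
  have r0_5 : Saux T 0 5 n = Saux T 0 4 n + Saux T 0 3 n + Saux T 0 2 n := Saux_rec2 T hTrec 0 2 n
  have r1_5 : Saux T 1 5 n = Saux T 1 4 n + Saux T 1 3 n + Saux T 1 2 n := Saux_rec2 T hTrec 1 2 n
  have r0_4 : Saux T 0 4 n = Saux T 0 3 n + Saux T 0 2 n + Saux T 0 1 n := Saux_rec2 T hTrec 0 1 n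
  have r1_4 : Saux T 1 4 n = Saux T 1 3 n + Saux T 1 2 n + Saux T 1 1 n := Saux_rec2 T hTrec 1 1 n
  have r2_4 : Saux T 2 4 n = Saux T 2 3 n + Saux T 2 2 n + Saux T 2 1 n := Saux_rec2 T hTrec 2 1 n
  have r0_3 : Saux T 0 3 n = Saux T 0 2 n + Saux T 0 1 n + Saux T 0 0 n := Saux_rec2 T hTrec 0 0 n
  have r1_3 : Saux T 1 3 n = Saux T 1 2 n + Saux T 1 1 n + Saux T 1 0 n := Saux_rec2 T hTrec 1 0 n
  have r2_3 : Saux T 2 3 n = Saux T 2 2 n + Saux T 2 1 n + Saux T 2 0 n := Saux_rec2 T hTrec 2 0 n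
  simp only [h0_0_6, h0_0_5, h0_1_5, h1_0_5, h0_0_4, h0_1_4, h0_2_4, h1_0_4, h1_1_4, h2_0_4, h0_0_3, h0_1_3, h0_2_3, h0_3_3, h1_0_3, h1_1_3, h1_2_3, h2_0_3, h2_1_3, h3_0_3, h0_0_2, h0_1_2, h0_2_2, h0_3_2, h0_4_2, h1_0_2, h1_1_2, h1_2_2, h1_3_2, h2_0_2, h2_1_2, h2_2_2, h3_0_2, h3_1_2, h4_0_2, h0_0_1, h0_1_1, h0_2_1, h0_3_1, h0_4_1, h0_5_1, h1_0_1, h1_1_1, h1_2_1, h1_3_1, h1_4_1, h2_0_1, h2_1_1, h2_2_1, h2_3_1, h3_0_1, h3_1_1, h3_2_1, h4_0_1, h4_1_1, h5_0_1, r6_0, r5_0, r5_1, r4_0, r4_1, r4_2, r3_0, r3_1, r3_2, r3_3, r0_6, r0_5, r1_5, r0_4, r1_4, r2_4, r0_3, r1_3, r2_3]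
  ring
end

section
/- For an integer $k \ge 2$, let the $k$-bonacci sequence $T^{(k)}$ be defined by $T^{(k)}_n = 0$ for $0 \le n \le k-2$, $T^{(k)}_{k-1} = 1$, and $T^{(k)}_{n+k} = \sum_{i=1}^{k} T^{(k)}_{n+k-i}$ for all $n \ge 0$. Then the binomial self-convolution $C(n) = \sum_{j=0}^{n} \binom{n}{j} T^{(k)}_j T^{(k)}_{n-j}$ is C-finite of order at most $k(k+1)/2$: there exist complex constants $c_1, \dots, c_m$ with $m = k(k+1)/2$ such that $C(n+m) = \sum_{i=1}^{m} c_i\, C(n+m-i)$ for all natural numbers $n$. -/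
open Finset

/-- Auxiliary: binomial convolution of shifted copies of `T`. -/
noncomputable def Dfun (T : ℕ → ℕ) (a b : ℕ) : ℕ → ℂ :=
  fun n => ∑ j ∈ Finset.range (n + 1),
    (n.choose j : ℂ) * (T (j + a) : ℂ) * (T (n - j + b) : ℂ)

/-- The shift operator on sequences as a linear map. -/
noncomputable def shiftL : (ℕ → ℂ) →ₗ[ℂ] (ℕ → ℂ) where
  toFun f := fun n => f (n + 1)
  map_add' _ _ := rfl
  map_smul' _ _ := rfl

lemma Dfun_symm (T : ℕ → ℕ) (a b : ℕ) : Dfun T a b = Dfun T b a := by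
  funext n
  unfold Dfun
  rw [← Finset.sum_range_reflect]
  apply Finset.sum_congr rfl
  intro j hj
  rw [Finset.mem_range] at hj
  have hj' : j ≤ n := by omega
  have e1 : n + 1 - 1 - j = n - j := by omega
  have e2 : n - (n - j) = j := by omega
  rw [e1, Nat.choose_symm hj', e2]
  ring

lemma Dfun_succ (T : ℕ → ℕ) (a b n : ℕ) :
    Dfun T a b (n + 1) = Dfun T (a + 1) b n + Dfun T a (b + 1) n := by
  have hB : ∑ j ∈ Finset.range (n + 1), (n.choose j : ℂ) * (T (j + a) : ℂ) * (T (n - j + (b + 1)) : ℂ)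
      = ∑ j ∈ Finset.range (n + 2), (n.choose j : ℂ) * (T (j + a) : ℂ) * (T (n + 1 - j + b) : ℂ) := by
    conv_rhs => rw [Finset.sum_range_succ]
    rw [Nat.choose_succ_self]
    push_cast
    rw [zero_mul, zero_mul, add_zero]
    apply Finset.sum_congr rfl
    intro j hj
    rw [Finset.mem_range] at hj
    have e : n - j + (b + 1) = n + 1 - j + b := by omega
    rw [e]
  have hsplit : ∀ j, ((n + 1).choose (j + 1) : ℂ) = (n.choose j : ℂ) + (n.choose (j + 1) : ℂ) := by
    intro j
    rw [Nat.choose_succ_succ]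
    push_cast
    ring
  unfold Dfun
  rw [Finset.sum_range_succ' (fun j => ((n + 1).choose j : ℂ) * (T (j + a) : ℂ) * (T (n + 1 - j + b) : ℂ)) (n + 1)]
  rw [hB, Finset.sum_range_succ'
    (fun j => (n.choose j : ℂ) * (T (j + a) : ℂ) * (T (n + 1 - j + b) : ℂ)) (n + 1)]
  have h1 : ∑ j ∈ Finset.range (n + 1),
      ((n + 1).choose (j + 1) : ℂ) * (T (j + 1 + a) : ℂ) * (T (n + 1 - (j + 1) + b) : ℂ)
      = ∑ j ∈ Finset.range (n + 1),
        ((n.choose j : ℂ) * (T (j + (a + 1)) : ℂ) * (T (n - j + b) : ℂ)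
          + (n.choose (j + 1) : ℂ) * (T (j + 1 + a) : ℂ) * (T (n + 1 - (j + 1) + b) : ℂ)) := by
    apply Finset.sum_congr rfl
    intro j hj
    rw [hsplit j]
    have e1 : j + 1 + a = j + (a + 1) := by omega
    have e2 : n + 1 - (j + 1) = n - j := by omega
    rw [e1, e2]
    ring
  rw [h1, Finset.sum_add_distrib]
  have e0 : ((n + 1).choose 0 : ℂ) = (n.choose 0 : ℂ) := by norm_num
  rw [e0]
  ring

lemma Dfun_reduce (T : ℕ → ℕ) (k : ℕ)
    (hTrec : ∀ n : ℕ, T (n + k) = ∑ i ∈ Finset.Icc 1 k, T (n + k - i))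
    (a b n : ℕ) :
    Dfun T (k + a) b n = ∑ i ∈ Finset.Icc 1 k, Dfun T (k + a - i) b n := by
  unfold Dfun
  rw [Finset.sum_comm]
  apply Finset.sum_congr rfl
  intro j hj
  have h1 : T (j + (k + a)) = ∑ i ∈ Finset.Icc 1 k, T (j + (k + a - i)) := by
    have h := hTrec (j + a)
    have e : j + a + k = j + (k + a) := by omega
    rw [e] at h
    rw [h]
    apply Finset.sum_congr rfl
    intro i hi
    rw [Finset.mem_Icc] at hi
    congr 1
    omega
  have h1c : (T (j + (k + a)) : ℂ) = ∑ i ∈ Finset.Icc 1 k, (T (j + (k + a - i)) : ℂ) := by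
    rw [h1]; push_cast; rfl
  rw [h1c, Finset.mul_sum, Finset.sum_mul]

lemma shiftL_pow_apply (t : ℕ) (f : ℕ → ℂ) (n : ℕ) : ((shiftL ^ t) f) n = f (n + t) := by
  induction t generalizing f with
  | zero => simp
  | succ t ih =>
    rw [pow_succ, Module.End.mul_apply, ih (shiftL f)]
    exact congrArg f (by omega : n + t + 1 = n + (t + 1))

/-- The generating finset: `Dfun T a b` for `a ≤ b < k`. -/
noncomputable def genSet (T : ℕ → ℕ) (k : ℕ) : Finset (ℕ → ℂ) :=
  letI := Classical.decEq (ℕ → ℂ)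
  ((Finset.range k).sigma fun b => Finset.range (b + 1)).image fun p => Dfun T p.2 p.1

/-- The span of the generating set. -/
noncomputable def Wmod (T : ℕ → ℕ) (k : ℕ) : Submodule ℂ (ℕ → ℂ) :=
  Submodule.span ℂ (genSet T k : Set (ℕ → ℂ))

lemma Wmod_fin (T : ℕ → ℕ) (k : ℕ) : FiniteDimensional ℂ (Wmod T k) :=
  FiniteDimensional.span_of_finite ℂ (genSet T k).finite_toSet

lemma finrank_Wmod_le (T : ℕ → ℕ) (k : ℕ) :
    Module.finrank ℂ (Wmod T k) ≤ k * (k + 1) / 2 := by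
  refine le_trans (finrank_span_finset_le_card (genSet T k)) ?_
  letI := Classical.decEq (ℕ → ℂ)
  unfold genSet
  refine le_trans Finset.card_image_le ?_
  rw [Finset.card_sigma]
  have h1 : ∑ b ∈ Finset.range k, (Finset.range (b + 1)).card
      = ∑ b ∈ Finset.range k, (b + 1) := by
    apply Finset.sum_congr rfl
    intro b _
    rw [Finset.card_range]
  rw [h1]
  have h2 : ∑ i ∈ Finset.range (k + 1), i = ∑ b ∈ Finset.range k, (b + 1) + 0 :=
    Finset.sum_range_succ' (fun i => i) k
  have h3 : ∑ i ∈ Finset.range (k + 1), i = k * (k + 1) / 2 := by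
    have e : (k + 1) * ((k + 1) - 1) = k * (k + 1) := by
      simp [Nat.mul_comm]
    rw [Finset.sum_range_id, e]
  omega

lemma mem_Wmod_of_le (T : ℕ → ℕ) (k a b : ℕ) (hab : a ≤ b) (hbk : b < k) :
    Dfun T a b ∈ Wmod T k := by
  apply Submodule.subset_span
  rw [Finset.mem_coe]
  unfold genSet
  letI := Classical.decEq (ℕ → ℂ)
  rw [Finset.mem_image]
  refine ⟨⟨b, a⟩, ?_, rfl⟩
  rw [Finset.mem_sigma, Finset.mem_range, Finset.mem_range]
  refine ⟨?_, ?_⟩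
  · show b < k
    exact hbk
  · show a < b + 1
    omega

lemma mem_Wmod (T : ℕ → ℕ) (k : ℕ) (hk1 : 1 ≤ k)
    (hTrec : ∀ n : ℕ, T (n + k) = ∑ i ∈ Finset.Icc 1 k, T (n + k - i)) :
    ∀ a b, Dfun T a b ∈ Wmod T k := by
  have hred : ∀ a b, Dfun T (k + a) b = ∑ i ∈ Finset.Icc 1 k, Dfun T (k + a - i) b := by
    intro a b
    funext n
    rw [Dfun_reduce T k hTrec a b n, Finset.sum_apply]
  have key : ∀ N a b, a + b ≤ N → Dfun T a b ∈ Wmod T k := by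
    intro N
    induction N with
    | zero =>
      intro a b hab
      have ha : a = 0 := by omega
      have hb : b = 0 := by omega
      subst ha; subst hb
      exact mem_Wmod_of_le T k 0 0 le_rfl (by omega)
    | succ N ih =>
      intro a b hab
      rcases le_or_gt k a with ha | ha
      · obtain ⟨a', rfl⟩ := Nat.exists_eq_add_of_le ha
        rw [hred a' b]
        apply Submodule.sum_mem
        intro i hi
        rw [Finset.mem_Icc] at hi
        apply ih
        omega
      · rcases le_or_gt k b with hb | hb
        · rw [Dfun_symm]
          obtain ⟨b', rfl⟩ := Nat.exists_eq_add_of_le hb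
          rw [hred b' a]
          apply Submodule.sum_mem
          intro i hi
          rw [Finset.mem_Icc] at hi
          rw [Dfun_symm]
          apply ih
          omega
        · rcases le_or_gt a b with hab' | hab'
          · exact mem_Wmod_of_le T k a b hab' hb
          · rw [Dfun_symm]; exact mem_Wmod_of_le T k b a (le_of_lt hab') ha
  intro a b
  exact key (a + b) a b le_rfl

lemma Wmod_shift_inv (T : ℕ → ℕ) (k : ℕ) (hk1 : 1 ≤ k)
    (hTrec : ∀ n : ℕ, T (n + k) = ∑ i ∈ Finset.Icc 1 k, T (n + k - i)) :
    ∀ x ∈ Wmod T k, shiftL x ∈ Wmod T k := by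
  have hshiftD : ∀ a b, shiftL (Dfun T a b) = Dfun T (a + 1) b + Dfun T a (b + 1) := by
    intro a b
    funext n
    exact Dfun_succ T a b n
  intro x hx
  induction hx using Submodule.span_induction with
  | mem x hxs =>
    rw [Finset.mem_coe] at hxs
    letI := Classical.decEq (ℕ → ℂ)
    unfold genSet at hxs
    rw [Finset.mem_image] at hxs
    obtain ⟨p, _, rfl⟩ := hxs
    rw [hshiftD]
    exact Submodule.add_mem _ (mem_Wmod T k hk1 hTrec _ _) (mem_Wmod T k hk1 hTrec _ _)
  | zero => rw [map_zero]; exact Submodule.zero_mem _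
  | add x y hx hy hx' hy' => rw [map_add]; exact Submodule.add_mem _ hx' hy'
  | smul a x hx hx' => rw [map_smul]; exact Submodule.smul_mem _ _ hx'

/-- The binomial self-convolution of the `k`-bonacci sequence is C-finite of order at
most `k*(k+1)/2`. -/
theorem kbonacci_self_convolution_cfinite
    (k : ℕ) (hk : 2 ≤ k)
    (T : ℕ → ℕ)
    (hT0 : ∀ n ≤ k - 2, T n = 0)
    (hT1 : T (k - 1) = 1)
    (hTrec : ∀ n : ℕ, T (n + k) = ∑ i ∈ Finset.Icc 1 k, T (n + k - i))
    (C : ℕ → ℂ)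
    (hC : ∀ n : ℕ,
      C n = ∑ j ∈ Finset.range (n + 1), (n.choose j : ℂ) * (T j : ℂ) * (T (n - j) : ℂ)) :
    ∃ c : ℕ → ℂ, ∀ n : ℕ,
      C (n + k * (k + 1) / 2) =
        ∑ i ∈ Finset.Icc 1 (k * (k + 1) / 2), c i * C (n + k * (k + 1) / 2 - i) := by
  classical
  have hk1 : 1 ≤ k := by omega
  set m := k * (k + 1) / 2 with hm
  have hm1 : 1 ≤ m := by
    rw [hm]
    have : 2 ≤ k * (k + 1) := by nlinarith
    omega
  -- C = Dfun T 0 0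
  have hC0 : C = Dfun T 0 0 := by
    funext n
    rw [hC n]
    unfold Dfun
    simp
  haveI := Wmod_fin T k
  have hpow : ∀ t, (shiftL ^ t) C ∈ Wmod T k := by
    intro t
    induction t with
    | zero => rw [pow_zero]; show C ∈ _; rw [hC0]; exact mem_Wmod T k hk1 hTrec 0 0
    | succ t ih =>
      rw [pow_succ']
      rw [Module.End.mul_apply]
      exact Wmod_shift_inv T k hk1 hTrec _ ih
  -- chain of spans
  set U : ℕ → Submodule ℂ (ℕ → ℂ) :=
    fun j => Submodule.span ℂ ((fun i => (shiftL ^ i) C) '' (Set.Iio j)) with hU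
  have hUfin : ∀ j, FiniteDimensional ℂ (U j) := by
    intro j
    exact FiniteDimensional.span_of_finite ℂ ((Set.finite_Iio j).image _)
  have hUW : ∀ j, U j ≤ Wmod T k := by
    intro j
    apply Submodule.span_le.2
    rintro x ⟨i, _, rfl⟩
    exact hpow i
  have hUmono : ∀ j j', j ≤ j' → U j ≤ U j' := by
    intro j j' hjj'
    apply Submodule.span_mono
    apply Set.image_mono
    intro x hx
    simp only [Set.mem_Iio] at *
    omega
  -- exists j ≤ m with (shiftL^j) C ∈ U j
  have claimA : ∃ j ≤ m, (shiftL ^ j) C ∈ U j := by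
    by_contra h
    push_neg at h
    have hstrict : ∀ j ≤ m, U j < U (j + 1) := by
      intro j hjm
      refine lt_of_le_of_ne (hUmono j (j + 1) (by omega)) ?_
      intro heq
      apply h j hjm
      rw [heq]
      apply Submodule.subset_span
      exact ⟨j, by simp, rfl⟩
    have hrank : ∀ j ≤ m + 1, j ≤ Module.finrank ℂ (U j) := by
      intro j
      induction j with
      | zero => intro _; omega
      | succ j ih =>
        intro hj
        have h1 := ih (by omega)
        have h2 : Module.finrank ℂ (U j) < Module.finrank ℂ (U (j + 1)) := by
          haveI := hUfin (j + 1)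
          exact Submodule.finrank_lt_finrank_of_lt (hstrict j (by omega))
        omega
    have hle := hrank (m + 1) le_rfl
    have hfr := finrank_Wmod_le T k
    have : Module.finrank ℂ (U (m + 1)) ≤ Module.finrank ℂ (Wmod T k) :=
      Submodule.finrank_mono (hUW (m + 1))
    omega
  obtain ⟨j, hjm, hmemj⟩ := claimA
  -- U j is shift invariant
  have hUinv : ∀ x ∈ U j, shiftL x ∈ U j := by
    intro x hx
    induction hx using Submodule.span_induction with
    | mem x hxs =>
      obtain ⟨i, hi, rfl⟩ := hxs
      simp only [Set.mem_Iio] at hi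
      have hstep : shiftL ((shiftL ^ i) C) = (shiftL ^ (i + 1)) C := by
        rw [pow_succ', Module.End.mul_apply]
      rw [hstep]
      rcases lt_or_eq_of_le (Nat.succ_le_of_lt hi) with h' | h'
      · exact Submodule.subset_span ⟨i + 1, h', rfl⟩
      · rw [show i + 1 = j from h']; exact hmemj
    | zero => rw [map_zero]; exact Submodule.zero_mem _
    | add x y hx hy hx' hy' => rw [map_add]; exact Submodule.add_mem _ hx' hy'
    | smul a x hx hx' => rw [map_smul]; exact Submodule.smul_mem _ _ hx'
  have hall : ∀ d, (shiftL ^ (j + d)) C ∈ U j := by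
    intro d
    induction d with
    | zero => exact hmemj
    | succ d ih =>
      have hstep : (shiftL ^ (j + d + 1)) C = shiftL ((shiftL ^ (j + d)) C) := by
        rw [pow_succ', Module.End.mul_apply]
      rw [show j + (d + 1) = j + d + 1 by omega, hstep]
      exact hUinv _ ih
  have hmC : (shiftL ^ m) C ∈ U j := by
    have h := hall (m - j)
    rwa [show j + (m - j) = m by omega] at h
  set v : Fin m → (ℕ → ℂ) := fun i => (shiftL ^ (i : ℕ)) C with hv
  have hUv : U j ≤ Submodule.span ℂ (Set.range v) := by
    apply Submodule.span_le.2
    rintro x ⟨i, hi, rfl⟩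
    simp only [Set.mem_Iio] at hi
    apply Submodule.subset_span
    exact ⟨⟨i, by omega⟩, rfl⟩
  have hmem2 : (shiftL ^ m) C ∈ Submodule.span ℂ (Set.range v) := hUv hmC
  rw [Submodule.mem_span_range_iff_exists_fun] at hmem2
  obtain ⟨c, hc⟩ := hmem2
  -- define final coefficients
  refine ⟨fun i => if h : 1 ≤ i ∧ i ≤ m then c ⟨m - i, by omega⟩ else 0, ?_⟩
  intro n
  have hptw := congrFun hc n
  rw [Finset.sum_apply] at hptw
  have hlhs : C (n + m) = ∑ i : Fin m, c i * C (n + (i : ℕ)) := by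
    rw [← shiftL_pow_apply m C n, ← hptw]
    apply Finset.sum_congr rfl
    intro i _
    have hvi : v i n = C (n + (i : ℕ)) := shiftL_pow_apply (i : ℕ) C n
    rw [Pi.smul_apply, hvi, smul_eq_mul]
  rw [hlhs]
  refine Finset.sum_nbij' (fun i : Fin m => m - (i : ℕ))
    (fun i => if h : 1 ≤ i ∧ i ≤ m then (⟨m - i, by omega⟩ : Fin m) else ⟨0, by omega⟩)
    ?_ ?_ ?_ ?_ ?_
  · intro i _
    rw [Finset.mem_Icc]
    have := i.isLt
    omega
  · intro i _
    exact Finset.mem_univ _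
  · intro i _
    have hlt := i.isLt
    have h1 : 1 ≤ m - (i : ℕ) ∧ m - (i : ℕ) ≤ m := by omega
    rw [dif_pos h1]
    ext
    dsimp only
    omega
  · intro i hi
    rw [Finset.mem_Icc] at hi
    rw [dif_pos hi]
    dsimp only
    omega
  · intro i _
    have hlt := i.isLt
    have h1 : 1 ≤ m - (i : ℕ) ∧ m - (i : ℕ) ≤ m := by omega
    dsimp only
    rw [dif_pos h1]
    have e1 : (⟨m - (m - (i : ℕ)), by omega⟩ : Fin m) = i := by
      ext
      dsimp only
      omega
    rw [e1]
    have e2 : n + m - (m - (i : ℕ)) = n + (i : ℕ) := by omega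
    rw [e2]
end
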